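/- Let Γ be a group with a left-invariant word metric d, let Γ_i be a normal subgroup of Γ, and let r > 0 be such that B_Γ(e,2r) ∩ Γ_i = {e}. If {γ_1,…,γ_n} and {γ'_1,…,γ'_n} are subsets of Γ each of diameter at most r, and γ_j γ'_j^{-1} ∈ Γ_i for all j ∈ {1,…,n}, then γ_j γ'_j^{-1} = γ_k γ'_k^{-1} for all j, k ∈ {1,…,n}. -/

import Mathlib

/-!
Conjugating `(γ_j γ'_j⁻¹)(γ_k γ'_k⁻¹)⁻¹ ∈ Γ_i` by `γ_j⁻¹` gives `γ'_j⁻¹ γ'_k γ_k⁻¹ γ_j`, which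
stays in the normal subgroup `Γ_i`. By left invariance its distance to `e` is at most
`d(γ'_j, γ'_k) + d(γ_k, γ_j) ≤ 2r`, so it is trivial.
-/

section LeftInvariant

variable {G : Type*} [Group G] [PseudoMetricSpace G] [IsIsometricSMul G G]

theorem dist_one_inv_mul (x y : G) : dist 1 (x⁻¹ * y) = dist x y := by
  simpa using (dist_mul_left x 1 (x⁻¹ * y)).symm

theorem dist_one_inv_mul_mul_inv_mul_le (x x' y y' : G) :
    dist 1 (x'⁻¹ * y' * (y⁻¹ * x)) ≤ dist x' y' + dist y x :=
  calc dist 1 (x'⁻¹ * y' * (y⁻¹ * x)) = dist x' (y' * (y⁻¹ * x)) := by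
        rw [mul_assoc, dist_one_inv_mul]
    _ ≤ dist x' y' + dist y' (y' * (y⁻¹ * x)) := dist_triangle _ _ _
    _ = dist x' y' + dist y x := by
        rw [← dist_one_inv_mul y x, ← dist_mul_left y' 1, mul_one]

theorem mul_inv_eq_mul_inv_of_dist_le {N : Subgroup G} [N.Normal] {r : ℝ}
    (hball : ∀ g ∈ N, dist (1 : G) g ≤ 2 * r → g = 1) {x x' y y' : G}
    (hx : x * x'⁻¹ ∈ N) (hy : y * y'⁻¹ ∈ N) (hxy : dist x y ≤ r) (hxy' : dist x' y' ≤ r) :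
    x * x'⁻¹ = y * y'⁻¹ := by
  have hconj : x⁻¹ * (x * x'⁻¹ * (y * y'⁻¹)⁻¹) * x = x'⁻¹ * y' * (y⁻¹ * x) := by group
  have hmem : x'⁻¹ * y' * (y⁻¹ * x) ∈ N :=
    hconj ▸ Subgroup.Normal.conj_mem' ‹_› _ (N.mul_mem hx (N.inv_mem hy)) x
  have hdist : dist 1 (x'⁻¹ * y' * (y⁻¹ * x)) ≤ 2 * r := by
    linarith [dist_one_inv_mul_mul_inv_mul_le x x' y y', dist_comm x y]
  have hone := hball _ hmem hdist
  rwa [← hconj, mul_assoc, inv_mul_eq_one, right_eq_mul, mul_inv_eq_one] at hone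

end LeftInvariant

theorem stmt0_general {Γ : Type*} [Group Γ] [MetricSpace Γ]
    (hinv : ∀ g x y : Γ, dist (g * x) (g * y) = dist x y)
    (N : Subgroup Γ) [N.Normal] (r : ℝ)
    (hball : ∀ g ∈ N, dist (1 : Γ) g ≤ 2 * r → g = 1)
    (n : ℕ) (γ γ' : Fin n → Γ)
    (hdiam : ∀ j k, dist (γ j) (γ k) ≤ r)
    (hdiam' : ∀ j k, dist (γ' j) (γ' k) ≤ r)
    (hN : ∀ j, γ j * (γ' j)⁻¹ ∈ N) :
    ∀ j k, γ j * (γ' j)⁻¹ = γ k * (γ' k)⁻¹ := by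
  have : IsIsometricSMul Γ Γ := ⟨fun g => Isometry.of_dist_eq (hinv g)⟩
  exact fun j k => mul_inv_eq_mul_inv_of_dist_le hball (hN j) (hN k) (hdiam j k) (hdiam' j k)

/-- Let `Γ` be a group with a left-invariant metric `d`,
`N` a normal subgroup, and `r > 0` with `B_Γ(e, 2r) ∩ N = {e}`.
If `{γ_1,…,γ_n}` and `{γ'_1,…,γ'_n}` are subsets of `Γ` of diameter at most `r`
with `γ_j * (γ'_j)⁻¹ ∈ N` for all `j`, then all the elements `γ_j * (γ'_j)⁻¹`
coincide. -/
theorem stmt0 {Γ : Type*} [Group Γ] [MetricSpace Γ]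
    (hinv : ∀ g x y : Γ, dist (g * x) (g * y) = dist x y)
    (N : Subgroup Γ) [N.Normal] (r : ℝ) (hr : 0 < r)
    (hball : ∀ g ∈ N, dist (1 : Γ) g ≤ 2 * r → g = 1)
    (n : ℕ) (γ γ' : Fin n → Γ)
    (hdiam : ∀ j k, dist (γ j) (γ k) ≤ r)
    (hdiam' : ∀ j k, dist (γ' j) (γ' k) ≤ r)
    (hN : ∀ j, γ j * (γ' j)⁻¹ ∈ N) :
    ∀ j k, γ j * (γ' j)⁻¹ = γ k * (γ' k)⁻¹ :=
  stmt0_general hinv N r hball n γ γ' hdiam hdiam' hN
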